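/- Let Γ ≤ S_n be a transitive permutation group and z ∈ Z^n. Let E = {i ∈ [n] : z_i is even} and let Γ'(z) ≤ Γ be the setwise stabilizer of E. If some orbit O of Γ'(z) on [n] contains two indices k, l with z_k ≠ z_l, then z is not a core point with respect to Γ. -/

import Mathlib

noncomputable section

open scoped RealInnerProductSpace

def permAct {n : ℕ} (γ : Equiv.Perm (Fin n)) (x : EuclideanSpace ℝ (Fin n)) :
    EuclideanSpace ℝ (Fin n) := WithLp.toLp 2 (fun i => x (γ⁻¹ i))

def allOnes (n : ℕ) : EuclideanSpace ℝ (Fin n) := WithLp.toLp 2 (fun _ => 1)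

def intVec {n : ℕ} (z : Fin n → ℤ) : EuclideanSpace ℝ (Fin n) := WithLp.toLp 2 (fun i => (z i : ℝ))

def orbitSet {n : ℕ} (Γ : Subgroup (Equiv.Perm (Fin n))) (x : EuclideanSpace ℝ (Fin n)) :
    Set (EuclideanSpace ℝ (Fin n)) := {y | ∃ γ ∈ Γ, y = permAct γ x}

def IsCorePoint {n : ℕ} (Γ : Subgroup (Equiv.Perm (Fin n))) (z : Fin n → ℤ) : Prop :=
  ∀ y : Fin n → ℤ, intVec y ∈ convexHull ℝ (orbitSet Γ (intVec z)) →
    intVec y ∈ orbitSet Γ (intVec z)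

def stabSub {n : ℕ} (Γ : Subgroup (Equiv.Perm (Fin n))) (v : EuclideanSpace ℝ (Fin n)) :
    Subgroup (Equiv.Perm (Fin n)) where
  carrier := {γ | γ ∈ Γ ∧ permAct γ v = v}
  one_mem' := ⟨Γ.one_mem, rfl⟩
  mul_mem' := fun {a b} ha hb => ⟨Γ.mul_mem ha.1 hb.1, by
    have h : permAct (a * b) v = permAct a (permAct b v) := rfl
    rw [h, hb.2, ha.2]⟩
  inv_mem' := fun {a} ha => ⟨Γ.inv_mem ha.1, by
    conv_lhs => rw [← ha.2]
    have h : permAct a⁻¹ (permAct a v) = permAct (a⁻¹ * a) v := rfl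
    rw [h, inv_mul_cancel]; rfl⟩


/-!
If `γ ∈ Γ` preserves the parity pattern of `z`, then `z` and `γz` agree mod 2, so their midpoint
is an integer point of `conv(Γz)`. All points of `Γz` have the Euclidean norm of `z`, while by
strict convexity the midpoint of two distinct points of that sphere has smaller norm; so for a
core point `γz = z`, which forces `z` to be constant on the orbits of the parity stabilizer.
-/

lemma norm_permAct {n : ℕ} (γ : Equiv.Perm (Fin n)) (x : EuclideanSpace ℝ (Fin n)) :
    ‖permAct γ x‖ = ‖x‖ := by
  simp only [EuclideanSpace.norm_eq, permAct]
  rw [Equiv.sum_comp γ⁻¹ (fun i => ‖x i‖ ^ 2)]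

lemma self_mem_orbitSet {n : ℕ} (Γ : Subgroup (Equiv.Perm (Fin n)))
    (x : EuclideanSpace ℝ (Fin n)) : x ∈ orbitSet Γ x :=
  ⟨1, Γ.one_mem, rfl⟩

lemma permAct_mem_orbitSet {n : ℕ} {Γ : Subgroup (Equiv.Perm (Fin n))} {γ : Equiv.Perm (Fin n)}
    (hγ : γ ∈ Γ) (x : EuclideanSpace ℝ (Fin n)) : permAct γ x ∈ orbitSet Γ x :=
  ⟨γ, hγ, rfl⟩

lemma norm_eq_of_mem_orbitSet {n : ℕ} {Γ : Subgroup (Equiv.Perm (Fin n))}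
    {x y : EuclideanSpace ℝ (Fin n)} (hy : y ∈ orbitSet Γ x) : ‖y‖ = ‖x‖ := by
  obtain ⟨γ, -, rfl⟩ := hy
  exact norm_permAct γ x

lemma permAct_intVec {n : ℕ} (γ : Equiv.Perm (Fin n)) (z : Fin n → ℤ) :
    permAct γ (intVec z) = intVec (fun i => z (γ⁻¹ i)) :=
  rfl

lemma intVec_injective {n : ℕ} : Function.Injective (intVec (n := n)) := fun z w h =>
  funext fun i => by simpa [intVec] using congrArg (fun v => v i) h

lemma intVec_half_add {n : ℕ} {z w : Fin n → ℤ} (heven : ∀ i, Even (z i + w i)) :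
    intVec (fun i => (z i + w i) / 2) = (1 / 2 : ℝ) • intVec z + (1 / 2 : ℝ) • intVec w := by
  ext i
  obtain ⟨c, hc⟩ := heven i
  simp only [intVec, PiLp.toLp_apply, PiLp.add_apply, PiLp.smul_apply, smul_eq_mul]
  have hhalf : (z i + w i) / 2 = c := by omega
  have hsum : ((z i : ℝ) + w i) = c + c := by exact_mod_cast hc
  rw [hhalf]
  linarith

theorem IsCorePoint.apply_inv_eq_of_even_add {n : ℕ} {Γ : Subgroup (Equiv.Perm (Fin n))}
    {z : Fin n → ℤ} (hz : IsCorePoint Γ z) {γ : Equiv.Perm (Fin n)} (hγ : γ ∈ Γ)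
    (heven : ∀ i, Even (z i + z (γ⁻¹ i))) (i : Fin n) : z (γ⁻¹ i) = z i := by
  set w : Fin n → ℤ := fun i => z (γ⁻¹ i)
  suffices w = z from congrFun this i
  by_contra hne
  have hw_mem : intVec w ∈ orbitSet Γ (intVec z) := permAct_mem_orbitSet hγ _
  have hmid := intVec_half_add heven
  have hmid_mem : intVec (fun i => (z i + w i) / 2) ∈ convexHull ℝ (orbitSet Γ (intVec z)) := by
    rw [hmid]
    exact convex_convexHull ℝ _ (subset_convexHull ℝ _ (self_mem_orbitSet Γ _))
      (subset_convexHull ℝ _ hw_mem) (by norm_num) (by norm_num) (by norm_num)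
  have hmid_lt : ‖intVec (fun i => (z i + w i) / 2)‖ < ‖intVec z‖ := by
    rw [hmid]
    exact norm_combo_lt_of_ne le_rfl (norm_eq_of_mem_orbitSet hw_mem).le
      (intVec_injective.ne (Ne.symm hne)) (by norm_num) (by norm_num) (by norm_num)
  exact hmid_lt.ne (norm_eq_of_mem_orbitSet (hz _ hmid_mem))

theorem stmt4_general {n : ℕ} (Γ : Subgroup (Equiv.Perm (Fin n)))
    (z : Fin n → ℤ)
    (k l : Fin n) (γ : Equiv.Perm (Fin n)) (hγΓ : γ ∈ Γ)
    (hγE : ∀ i : Fin n, Even (z i) ↔ Even (z (γ i)))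
    (hkl : γ k = l) (hne : z k ≠ z l) :
    ¬ IsCorePoint Γ z := by
  intro hcore
  have heven : ∀ i, Even (z i + z (γ⁻¹ i)) := fun i =>
    Int.even_add.mpr (by simpa using (hγE (γ⁻¹ i)).symm)
  have hinv : γ⁻¹ l = k := Equiv.Perm.inv_eq_iff_eq.mpr hkl.symm
  exact hne (hinv ▸ hcore.apply_inv_eq_of_even_add hγΓ heven l)

theorem stmt4 {n : ℕ} (Γ : Subgroup (Equiv.Perm (Fin n)))
    (htrans : ∀ i j : Fin n, ∃ γ ∈ Γ, γ i = j) (z : Fin n → ℤ)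
    (k l : Fin n) (γ : Equiv.Perm (Fin n)) (hγΓ : γ ∈ Γ)
    (hγE : ∀ i : Fin n, Even (z i) ↔ Even (z (γ i)))
    (hkl : γ k = l) (hne : z k ≠ z l) :
    ¬ IsCorePoint Γ z :=
  stmt4_general Γ z k l γ hγΓ hγE hkl hne
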